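/- The map f ↦ MIC*(f), sending a probability density function on [0,1]² (with the L¹ metric) to the population maximal information coefficient of the corresponding random variable, is uniformly continuous. Quantitatively: if ‖f − f'‖₁ ≤ 2δ with δ ≤ 1/4, then |MIC*(f) − MIC*(f')| ≤ 4H_b(2δ) + 7δ. -/

import Mathlib

open MeasureTheory Real Filter Topology
open scoped ENNReal

/-- Discrete mutual information of a joint distribution `μ` on `ℝ × ℝ` discretized by a grid
with row-quantizer `rowf` (on the y-axis, values below `k`) and column-quantizer `colf`
(on the x-axis, values below `l`): `I = H(rows) + H(cols) − H(cells)`. -/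
noncomputable def gridMI (μ : Measure (ℝ × ℝ)) (k l : ℕ) (rowf colf : ℝ → ℕ) : ℝ :=
    (∑ i ∈ Finset.range k, Real.negMulLog ((μ {z | rowf z.2 = i}).toReal))
  + (∑ j ∈ Finset.range l, Real.negMulLog ((μ {z | colf z.1 = j}).toReal))
  - ∑ i ∈ Finset.range k, ∑ j ∈ Finset.range l,
      Real.negMulLog ((μ {z | rowf z.2 = i ∧ colf z.1 = j}).toReal)

/-- A partition of the line into at most `k` intervals, encoded as a monotone cell-index map. -/
def IsIntervalPart (k : ℕ) (p : ℝ → ℕ) : Prop := Monotone p ∧ ∀ t, p t < k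

/-- A finite measurable partition of the line into at most `k` cells. -/
def IsMeasPart (k : ℕ) (p : ℝ → ℕ) : Prop := Measurable p ∧ ∀ t, p t < k

/-- `I*((X,Y),k,ℓ)`: the supremum of discrete mutual information over all `k`-row-by-`ℓ`-column
grids applied to the joint distribution `μ`. -/
noncomputable def IStar (μ : Measure (ℝ × ℝ)) (k l : ℕ) : ℝ :=
  ⨆ g : {g : (ℝ → ℕ) × (ℝ → ℕ) // IsIntervalPart k g.1 ∧ IsIntervalPart l g.2},
    gridMI μ k l g.1.1 g.1.2

/-- The `(k,ℓ)` entry of the population characteristic matrix. -/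
noncomputable def charMatrix (μ : Measure (ℝ × ℝ)) (k l : ℕ) : ℝ :=
  IStar μ k l / Real.log (min k l)

/-- The population maximal information coefficient `MIC*`. -/
noncomputable def MICStar (μ : Measure (ℝ × ℝ)) : ℝ :=
  ⨆ (k : {n : ℕ // 1 < n}) (l : {n : ℕ // 1 < n}), charMatrix μ k l

/-- `I(X, Y|_P)`: mutual information between `X` and the discretization of `Y` by the
partition `rowf` (into at most `k` cells), defined as the supremum of discrete mutual
informations over all finite measurable quantizations of `X`. -/
noncomputable def mixedMI_Y (μ : Measure (ℝ × ℝ)) (k : ℕ) (rowf : ℝ → ℕ) : ℝ :=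
  ⨆ c : {c : ℕ × (ℝ → ℕ) // IsMeasPart c.1 c.2}, gridMI μ k c.1.1 rowf c.1.2

/-- `I(X|_P, Y)`: mutual information between the discretization of `X` by the partition
`colf` (into at most `ℓ` cells) and `Y`. -/
noncomputable def mixedMI_X (μ : Measure (ℝ × ℝ)) (l : ℕ) (colf : ℝ → ℕ) : ℝ :=
  ⨆ r : {r : ℕ × (ℝ → ℕ) // IsMeasPart r.1 r.2}, gridMI μ r.1.1 l r.1.2 colf

/-- The mutual information of a joint distribution on `ℝ × ℝ` (possibly infinite), defined as
the supremum over all finite measurable quantizations of both coordinates of the discrete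
mutual information. -/
noncomputable def mutualInfo (μ : Measure (ℝ × ℝ)) : ℝ≥0∞ :=
  ⨆ g : {g : (ℕ × (ℝ → ℕ)) × (ℕ × (ℝ → ℕ)) //
      IsMeasPart g.1.1 g.1.2 ∧ IsMeasPart g.2.1 g.2.2},
    ENNReal.ofReal (gridMI μ g.1.1.1 g.1.2.1 g.1.1.2 g.1.2.2)

/-!
Discretize both densities by the same grid. Integrating over the cells can only decrease the
`L¹` distance, so the two cell distributions are `2δ`-close in `ℓ¹`. Write the discrete mutual
information as `H(A) - H(A | B)`, where `A` is the axis with fewer cells. The Alicki–Fannes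
inequality bounds the change of each term by `δ log |A| + (1 + δ) H_b(δ / (1 + δ))`, and
`(1 + δ) H_b(δ / (1 + δ)) = negMulLog δ - negMulLog (1 + δ)`. Dividing by
`log min {k, ℓ} ≥ log 2` and passing to suprema gives
`|MIC*(f) - MIC*(f')| ≤ 2δ + 2 (negMulLog δ - negMulLog (1 + δ)) / log 2`, and this is at most
`4 H_b(2δ) + 7δ` when `δ ≤ 1/4`.

All the properties of conditional entropy that the Alicki–Fannes argument needs (nonnegativity,
the bound by `log |A|`, superadditivity and subadditivity up to a mixing term) are instances of
the log-sum inequality.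
-/

open Finset

/-- The perspective `v * negMulLog (u / v)` of `negMulLog`, written without division so that
its identities need no case split at `v = 0`. -/
noncomputable def perspNegMulLog (u v : ℝ) : ℝ := u * (log v - log u)

lemma perspNegMulLog_nonneg {u v : ℝ} (hu : 0 ≤ u) (huv : u ≤ v) : 0 ≤ perspNegMulLog u v := by
  rcases hu.eq_or_lt with rfl | hu
  · simp [perspNegMulLog]
  exact mul_nonneg hu.le (sub_nonneg.2 (log_le_log hu huv))

lemma mul_negMulLog_div {u v : ℝ} (hu : 0 ≤ u) (huv : u ≤ v) :
    v * negMulLog (u / v) = perspNegMulLog u v := by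
  rcases hu.eq_or_lt with rfl | hu
  · simp [perspNegMulLog]
  have hv : 0 < v := hu.trans_le huv
  rw [negMulLog, log_div hu.ne' hv.ne', perspNegMulLog]
  field_simp
  ring

lemma perspNegMulLog_add_self (x y : ℝ) :
    perspNegMulLog x (x + y) + perspNegMulLog y (x + y) =
      negMulLog x + negMulLog y - negMulLog (x + y) := by
  simp only [perspNegMulLog, negMulLog]
  ring

/-- The log-sum inequality. -/
theorem sum_perspNegMulLog_le {ι : Type*} (s : Finset ι) (u v : ι → ℝ)
    (hu : ∀ i ∈ s, 0 ≤ u i) (huv : ∀ i ∈ s, u i ≤ v i) :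
    ∑ i ∈ s, perspNegMulLog (u i) (v i) ≤ perspNegMulLog (∑ i ∈ s, u i) (∑ i ∈ s, v i) := by
  have hv : ∀ i ∈ s, 0 ≤ v i := fun i hi => (hu i hi).trans (huv i hi)
  have hu_eq_zero : ∀ i ∈ s, v i = 0 → u i = 0 := fun i hi h =>
    le_antisymm (h ▸ huv i hi) (hu i hi)
  set V := ∑ i ∈ s, v i
  rcases (sum_nonneg hv : 0 ≤ V).eq_or_lt with hV | hV
  · have hv0 : ∀ i ∈ s, v i = 0 := (sum_eq_zero_iff_of_nonneg hv).1 hV.symm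
    have hu0 : ∀ i ∈ s, u i = 0 := fun i hi => hu_eq_zero i hi (hv0 i hi)
    rw [sum_eq_zero fun i hi => by simp [perspNegMulLog, hu0 i hi], sum_eq_zero hu0]
    simp [perspNegMulLog]
  have hJensen := concaveOn_negMulLog.le_map_sum (t := s) (w := fun i => v i / V)
    (p := fun i => u i / v i) (fun i hi => div_nonneg (hv i hi) hV.le)
    (by rw [← sum_div, div_self hV.ne']) fun i hi => Set.mem_Ici.2 (div_nonneg (hu i hi) (hv i hi))
  simp only [smul_eq_mul] at hJensen
  have hmean : ∑ i ∈ s, v i / V * (u i / v i) = (∑ i ∈ s, u i) / V := by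
    rw [sum_div]
    refine sum_congr rfl fun i hi => ?_
    rcases (hv i hi).eq_or_lt with h | h
    · simp [← h, hu_eq_zero i hi h.symm]
    · field_simp
  rw [hmean] at hJensen
  calc ∑ i ∈ s, perspNegMulLog (u i) (v i) = V * ∑ i ∈ s, v i / V * negMulLog (u i / v i) := by
        rw [mul_sum]
        refine sum_congr rfl fun i hi => ?_
        rw [← mul_negMulLog_div (hu i hi) (huv i hi)]
        have : V ≠ 0 := hV.ne'
        field_simp
    _ ≤ V * negMulLog ((∑ i ∈ s, u i) / V) := mul_le_mul_of_nonneg_left hJensen hV.le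
    _ = perspNegMulLog (∑ i ∈ s, u i) V := mul_negMulLog_div (sum_nonneg hu) (sum_le_sum huv)

lemma perspNegMulLog_add_le {u v u' v' : ℝ} (hu : 0 ≤ u) (huv : u ≤ v) (hu' : 0 ≤ u')
    (huv' : u' ≤ v') :
    perspNegMulLog u v + perspNegMulLog u' v' ≤ perspNegMulLog (u + u') (v + v') := by
  simpa [Fin.sum_univ_two] using sum_perspNegMulLog_le univ ![u, u'] ![v, v']
    (by simp [Fin.forall_fin_two, hu, hu']) (by simp [Fin.forall_fin_two, huv, huv'])

lemma negMulLog_add_le {x y : ℝ} (hx : 0 ≤ x) (hy : 0 ≤ y) :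
    negMulLog (x + y) ≤ negMulLog x + negMulLog y := by
  have := perspNegMulLog_add_self x y
  have := perspNegMulLog_nonneg hx (le_add_of_nonneg_right hy)
  have := perspNegMulLog_nonneg hy (le_add_of_nonneg_left hx)
  linarith

lemma sum_negMulLog_add_sub_le {ι : Type*} (s : Finset ι) (x y : ι → ℝ)
    (hx : ∀ i ∈ s, 0 ≤ x i) (hy : ∀ i ∈ s, 0 ≤ y i) :
    ∑ i ∈ s, (negMulLog (x i) + negMulLog (y i) - negMulLog (x i + y i)) ≤
      negMulLog (∑ i ∈ s, x i) + negMulLog (∑ i ∈ s, y i) -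
        negMulLog (∑ i ∈ s, x i + ∑ i ∈ s, y i) := by
  have hx' := sum_perspNegMulLog_le s x (fun i => x i + y i) hx
    fun i hi => le_add_of_nonneg_right (hy i hi)
  have hy' := sum_perspNegMulLog_le s y (fun i => x i + y i) hy
    fun i hi => le_add_of_nonneg_left (hx i hi)
  simp only [sum_add_distrib] at hx' hy'
  simp only [← perspNegMulLog_add_self, sum_add_distrib]
  linarith

section ConditionalEntropy

variable {α β : Type*} {A : Finset α} {B : Finset β} {p q r : α → β → ℝ}

/-- `H(A | B)` for a nonnegative weight on `A × B`, not necessarily normalized. -/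
noncomputable def condEntropy (A : Finset α) (B : Finset β) (p : α → β → ℝ) : ℝ :=
  ∑ b ∈ B, (∑ a ∈ A, negMulLog (p a b) - negMulLog (∑ a ∈ A, p a b))

lemma condEntropy_eq_sum_perspNegMulLog (A : Finset α) (B : Finset β) (p : α → β → ℝ) :
    condEntropy A B p = ∑ b ∈ B, ∑ a ∈ A, perspNegMulLog (p a b) (∑ a' ∈ A, p a' b) := by
  refine sum_congr rfl fun b _ => ?_
  simp only [perspNegMulLog, negMulLog, mul_sub, sum_sub_distrib, ← sum_mul, neg_mul,
    sum_neg_distrib]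
  ring

lemma condEntropy_nonneg (hp : ∀ a ∈ A, ∀ b ∈ B, 0 ≤ p a b) : 0 ≤ condEntropy A B p := by
  rw [condEntropy_eq_sum_perspNegMulLog]
  exact sum_nonneg fun b hb => sum_nonneg fun a ha => perspNegMulLog_nonneg (hp a ha b hb)
    (single_le_sum (fun a' ha' => hp a' ha' b hb) ha)

lemma condEntropy_le_mul_log_card (hp : ∀ a ∈ A, ∀ b ∈ B, 0 ≤ p a b) :
    condEntropy A B p ≤ (∑ b ∈ B, ∑ a ∈ A, p a b) * log A.card := by
  rw [condEntropy_eq_sum_perspNegMulLog, sum_mul]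
  refine sum_le_sum fun b hb => ?_
  set P := ∑ a ∈ A, p a b
  calc ∑ a ∈ A, perspNegMulLog (p a b) P ≤ perspNegMulLog P (A.card * P) := by
        simpa using sum_perspNegMulLog_le A (fun a => p a b) (fun _ => P)
          (fun a ha => hp a ha b hb) fun a ha => single_le_sum (fun a' ha' => hp a' ha' b hb) ha
    _ = P * log A.card := by
        rcases eq_or_ne P 0 with hP | hP
        · simp [perspNegMulLog, hP]
        have hA : (A.card : ℝ) ≠ 0 :=
          Nat.cast_ne_zero.2 (card_ne_zero.2 (nonempty_of_sum_ne_zero hP))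
        rw [perspNegMulLog, log_mul hA hP]
        ring

lemma condEntropy_add_condEntropy_le (hp : ∀ a ∈ A, ∀ b ∈ B, 0 ≤ p a b)
    (hr : ∀ a ∈ A, ∀ b ∈ B, 0 ≤ r a b) :
    condEntropy A B p + condEntropy A B r ≤ condEntropy A B (fun a b => p a b + r a b) := by
  simp only [condEntropy_eq_sum_perspNegMulLog, ← sum_add_distrib]
  refine sum_le_sum fun b hb => sum_le_sum fun a ha => ?_
  rw [sum_add_distrib]
  exact perspNegMulLog_add_le (hp a ha b hb) (single_le_sum (fun a' ha' => hp a' ha' b hb) ha)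
    (hr a ha b hb) (single_le_sum (fun a' ha' => hr a' ha' b hb) ha)

lemma condEntropy_add_le (hp : ∀ a ∈ A, ∀ b ∈ B, 0 ≤ p a b)
    (hr : ∀ a ∈ A, ∀ b ∈ B, 0 ≤ r a b) :
    condEntropy A B (fun a b => p a b + r a b) ≤ condEntropy A B p + condEntropy A B r +
      (negMulLog (∑ b ∈ B, ∑ a ∈ A, p a b) + negMulLog (∑ b ∈ B, ∑ a ∈ A, r a b) -
        negMulLog (∑ b ∈ B, ∑ a ∈ A, p a b + ∑ b ∈ B, ∑ a ∈ A, r a b)) := by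
  have hmarginal := sum_negMulLog_add_sub_le B (fun b => ∑ a ∈ A, p a b)
    (fun b => ∑ a ∈ A, r a b) (fun b hb => sum_nonneg fun a ha => hp a ha b hb)
    (fun b hb => sum_nonneg fun a ha => hr a ha b hb)
  have hjoint : ∀ b ∈ B, ∑ a ∈ A, negMulLog (p a b + r a b) ≤
      ∑ a ∈ A, negMulLog (p a b) + ∑ a ∈ A, negMulLog (r a b) := fun b hb => by
    rw [← sum_add_distrib]
    exact sum_le_sum fun a ha => negMulLog_add_le (hp a ha b hb) (hr a ha b hb)
  calc condEntropy A B (fun a b => p a b + r a b)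
      ≤ ∑ b ∈ B, ((∑ a ∈ A, negMulLog (p a b) - negMulLog (∑ a ∈ A, p a b)) +
          (∑ a ∈ A, negMulLog (r a b) - negMulLog (∑ a ∈ A, r a b)) +
          (negMulLog (∑ a ∈ A, p a b) + negMulLog (∑ a ∈ A, r a b) -
            negMulLog (∑ a ∈ A, p a b + ∑ a ∈ A, r a b))) := by
        refine sum_le_sum fun b hb => ?_
        rw [sum_add_distrib]
        linarith [hjoint b hb]
    _ ≤ _ := by
        simp only [sum_add_distrib] at hmarginal ⊢
        simp only [condEntropy]
        linarith

/-- The Alicki–Fannes continuity bound for conditional entropy. -/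
theorem condEntropy_sub_le {δ : ℝ} (hp : ∀ a ∈ A, ∀ b ∈ B, 0 ≤ p a b)
    (hq : ∀ a ∈ A, ∀ b ∈ B, 0 ≤ q a b) (hp1 : ∑ b ∈ B, ∑ a ∈ A, p a b = 1)
    (hq1 : ∑ b ∈ B, ∑ a ∈ A, q a b = 1)
    (hpq : ∑ b ∈ B, ∑ a ∈ A, |p a b - q a b| ≤ 2 * δ) :
    condEntropy A B p - condEntropy A B q ≤
      δ * log A.card + (negMulLog δ - negMulLog (1 + δ)) := by
  set M := ∑ b ∈ B, ∑ a ∈ A, max (p a b) (q a b)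
  have hM : 2 * M = 2 + ∑ b ∈ B, ∑ a ∈ A, |p a b - q a b| := by
    have h2max : ∀ x y : ℝ, 2 * max x y = x + y + |x - y| := fun x y => by
      rcases le_total x y with h | h
      · rw [max_eq_right h, abs_of_nonpos (sub_nonpos.2 h)]; ring
      · rw [max_eq_left h, abs_of_nonneg (sub_nonneg.2 h)]; ring
    simp only [M, mul_sum, h2max, sum_add_distrib, hp1, hq1]
    ring
  -- `p + r = q + r'` is the common upper bound `max p q`, padded by a multiple of `p` so that
  -- `r` and `r'` both have mass exactly `δ`
  set c := 1 + δ - M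
  have hc : 0 ≤ c := by linarith
  set r : α → β → ℝ := fun a b => max (p a b) (q a b) - p a b + c * p a b
  set r' : α → β → ℝ := fun a b => max (p a b) (q a b) - q a b + c * p a b
  have hr : ∀ a ∈ A, ∀ b ∈ B, 0 ≤ r a b := fun a ha b hb =>
    add_nonneg (sub_nonneg.2 (le_max_left _ _)) (mul_nonneg hc (hp a ha b hb))
  have hr' : ∀ a ∈ A, ∀ b ∈ B, 0 ≤ r' a b := fun a ha b hb =>
    add_nonneg (sub_nonneg.2 (le_max_right _ _)) (mul_nonneg hc (hp a ha b hb))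
  have hr1 : ∑ b ∈ B, ∑ a ∈ A, r' a b = δ := by
    simp only [r', sum_add_distrib, sum_sub_distrib, ← mul_sum, hp1, hq1]
    ring
  have hpr : (fun a b => p a b + r a b) = fun a b => q a b + r' a b := by
    funext a b
    ring
  have hr'_le := condEntropy_le_mul_log_card hr'
  rw [hr1] at hr'_le
  suffices condEntropy A B p ≤ condEntropy A B q + condEntropy A B r' +
      (negMulLog δ - negMulLog (1 + δ)) by linarith
  calc condEntropy A B p ≤ condEntropy A B p + condEntropy A B r :=
        le_add_of_nonneg_right (condEntropy_nonneg hr)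
    _ ≤ condEntropy A B (fun a b => q a b + r' a b) :=
        hpr ▸ condEntropy_add_condEntropy_le hp hr
    _ ≤ condEntropy A B q + condEntropy A B r' + (negMulLog δ - negMulLog (1 + δ)) := by
        simpa [hq1, hr1] using condEntropy_add_le hq hr'

end ConditionalEntropy

section DiscreteMutualInformation

variable {α β : Type*} {A : Finset α} {B : Finset β} {p q : α → β → ℝ}

noncomputable def discreteMI (A : Finset α) (B : Finset β) (p : α → β → ℝ) : ℝ :=
  ∑ a ∈ A, negMulLog (∑ b ∈ B, p a b) + ∑ b ∈ B, negMulLog (∑ a ∈ A, p a b) -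
    ∑ a ∈ A, ∑ b ∈ B, negMulLog (p a b)

lemma discreteMI_eq_sub_condEntropy (A : Finset α) (B : Finset β) (p : α → β → ℝ) :
    discreteMI A B p = ∑ a ∈ A, negMulLog (∑ b ∈ B, p a b) - condEntropy A B p := by
  rw [discreteMI, condEntropy, sum_sub_distrib, sum_comm (s := A)]
  ring

lemma discreteMI_comm (A : Finset α) (B : Finset β) (p : α → β → ℝ) :
    discreteMI A B p = discreteMI B A (fun b a => p a b) := by
  rw [discreteMI, discreteMI, sum_comm (s := A)]
  ring

lemma sum_negMulLog_sub_le {v w : α → ℝ} {δ : ℝ} (hv : ∀ a ∈ A, 0 ≤ v a)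
    (hw : ∀ a ∈ A, 0 ≤ w a) (hv1 : ∑ a ∈ A, v a = 1) (hw1 : ∑ a ∈ A, w a = 1)
    (hvw : ∑ a ∈ A, |v a - w a| ≤ 2 * δ) :
    ∑ a ∈ A, negMulLog (v a) - ∑ a ∈ A, negMulLog (w a) ≤
      δ * log A.card + (negMulLog δ - negMulLog (1 + δ)) := by
  have h := condEntropy_sub_le (B := {()}) (p := fun a _ => v a) (q := fun a _ => w a)
    (by simpa using hv) (by simpa using hw) (by simpa using hv1) (by simpa using hw1)
    (by simpa using hvw)
  simpa only [condEntropy, sum_singleton, hv1, hw1, negMulLog_one, sub_zero] using h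

lemma abs_discreteMI_sub_le {δ : ℝ} (hp : ∀ a ∈ A, ∀ b ∈ B, 0 ≤ p a b)
    (hq : ∀ a ∈ A, ∀ b ∈ B, 0 ≤ q a b) (hp1 : ∑ b ∈ B, ∑ a ∈ A, p a b = 1)
    (hq1 : ∑ b ∈ B, ∑ a ∈ A, q a b = 1)
    (hpq : ∑ b ∈ B, ∑ a ∈ A, |p a b - q a b| ≤ 2 * δ) :
    |discreteMI A B p - discreteMI A B q| ≤
      2 * (δ * log A.card + (negMulLog δ - negMulLog (1 + δ))) := by
  have hqp : ∑ b ∈ B, ∑ a ∈ A, |q a b - p a b| ≤ 2 * δ := by simpa only [abs_sub_comm] using hpq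
  have hrows : ∑ a ∈ A, |∑ b ∈ B, p a b - ∑ b ∈ B, q a b| ≤ 2 * δ := calc
    _ ≤ ∑ a ∈ A, ∑ b ∈ B, |p a b - q a b| := sum_le_sum fun a _ => by
        rw [← sum_sub_distrib]
        exact abs_sum_le_sum_abs _ _
    _ = ∑ b ∈ B, ∑ a ∈ A, |p a b - q a b| := sum_comm
    _ ≤ 2 * δ := hpq
  have hrows' : ∑ a ∈ A, |∑ b ∈ B, q a b - ∑ b ∈ B, p a b| ≤ 2 * δ := by
    simpa only [abs_sub_comm] using hrows
  have hp1' : ∑ a ∈ A, ∑ b ∈ B, p a b = 1 := by rwa [sum_comm]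
  have hq1' : ∑ a ∈ A, ∑ b ∈ B, q a b = 1 := by rwa [sum_comm]
  have hprow : ∀ a ∈ A, 0 ≤ ∑ b ∈ B, p a b := fun a ha => sum_nonneg fun b hb => hp a ha b hb
  have hqrow : ∀ a ∈ A, 0 ≤ ∑ b ∈ B, q a b := fun a ha => sum_nonneg fun b hb => hq a ha b hb
  have h₁ := condEntropy_sub_le hp hq hp1 hq1 hpq
  have h₂ := condEntropy_sub_le hq hp hq1 hp1 hqp
  have h₃ := sum_negMulLog_sub_le hprow hqrow hp1' hq1' hrows
  have h₄ := sum_negMulLog_sub_le hqrow hprow hq1' hp1' hrows'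
  rw [discreteMI_eq_sub_condEntropy, discreteMI_eq_sub_condEntropy, abs_le]
  constructor <;> linarith

lemma abs_discreteMI_sub_le_log_min {δ : ℝ} (hp : ∀ a ∈ A, ∀ b ∈ B, 0 ≤ p a b)
    (hq : ∀ a ∈ A, ∀ b ∈ B, 0 ≤ q a b) (hp1 : ∑ b ∈ B, ∑ a ∈ A, p a b = 1)
    (hq1 : ∑ b ∈ B, ∑ a ∈ A, q a b = 1)
    (hpq : ∑ b ∈ B, ∑ a ∈ A, |p a b - q a b| ≤ 2 * δ) :
    |discreteMI A B p - discreteMI A B q| ≤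
      2 * (δ * log (min (A.card : ℝ) B.card) + (negMulLog δ - negMulLog (1 + δ))) := by
  rcases le_total (A.card : ℝ) B.card with h | h
  · rw [min_eq_left h]
    exact abs_discreteMI_sub_le hp hq hp1 hq1 hpq
  · rw [min_eq_right h, discreteMI_comm A, discreteMI_comm A]
    exact abs_discreteMI_sub_le (fun b hb a ha => hp a ha b hb) (fun b hb a ha => hq a ha b hb)
      (by rwa [sum_comm]) (by rwa [sum_comm]) (by rwa [sum_comm])

lemma discreteMI_le_log_card (hp : ∀ a ∈ A, ∀ b ∈ B, 0 ≤ p a b)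
    (hp1 : ∑ b ∈ B, ∑ a ∈ A, p a b = 1) : discreteMI A B p ≤ log A.card := by
  have hrow := condEntropy_le_mul_log_card (B := {()}) (p := fun a _ => ∑ b ∈ B, p a b)
    (by simpa using fun a ha => sum_nonneg fun b hb => hp a ha b hb)
  have hp1' : ∑ a ∈ A, ∑ b ∈ B, p a b = 1 := by rwa [sum_comm]
  simp only [condEntropy, sum_singleton, hp1', negMulLog_one, sub_zero, one_mul] at hrow
  rw [discreteMI_eq_sub_condEntropy]
  linarith [condEntropy_nonneg hp]

lemma discreteMI_le_log_min (hp : ∀ a ∈ A, ∀ b ∈ B, 0 ≤ p a b)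
    (hp1 : ∑ b ∈ B, ∑ a ∈ A, p a b = 1) :
    discreteMI A B p ≤ log (min (A.card : ℝ) B.card) := by
  rcases le_total (A.card : ℝ) B.card with h | h
  · rw [min_eq_left h]
    exact discreteMI_le_log_card hp hp1
  · rw [min_eq_right h, discreteMI_comm A]
    exact discreteMI_le_log_card (fun b hb a ha => hp a ha b hb) (by rwa [sum_comm])

end DiscreteMutualInformation

section Discretization

lemma IsIntervalPart.isMeasPart {k : ℕ} {p : ℝ → ℕ} (h : IsIntervalPart k p) : IsMeasPart k p :=
  ⟨h.1.measurable, h.2⟩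

lemma measureReal_eq_sum_preimage_inter {X ι : Type*} [MeasurableSpace X] [MeasurableSpace ι]
    [MeasurableSingletonClass ι] (μ : Measure X) [IsFiniteMeasure μ] {c : X → ι}
    (hc : Measurable c) (s : Finset ι) (hcs : ∀ x, c x ∈ s) (T : Set X) :
    μ.real T = ∑ i ∈ s, μ.real (c ⁻¹' {i} ∩ T) := by
  have hfib : ∀ i ∈ s, MeasurableSet (c ⁻¹' {i}) := fun i _ => hc (measurableSet_singleton i)
  rw [sum_congr rfl fun i hi => (measureReal_restrict_apply (hfib i hi)).symm,
    sum_measureReal_preimage_singleton s hfib, Set.preimage_eq_univ_iff.2 fun _ ⟨x, hx⟩ =>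
      hx ▸ hcs x, measureReal_restrict_apply MeasurableSet.univ, Set.univ_inter]

noncomputable def cellProb (μ : Measure (ℝ × ℝ)) (rowf colf : ℝ → ℕ) (i j : ℕ) : ℝ :=
  μ.real {z | rowf z.2 = i ∧ colf z.1 = j}

def GridL1DistLE (μ ν : Measure (ℝ × ℝ)) (ε : ℝ) : Prop :=
  ∀ k l rowf colf, IsMeasPart k rowf → IsMeasPart l colf →
    ∑ j ∈ range l, ∑ i ∈ range k, |cellProb μ rowf colf i j - cellProb ν rowf colf i j| ≤ ε

variable {μ ν : Measure (ℝ × ℝ)} {k l : ℕ} {rowf colf : ℝ → ℕ}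

lemma gridMI_eq_discreteMI [IsFiniteMeasure μ] (hrow : IsMeasPart k rowf)
    (hcol : IsMeasPart l colf) :
    gridMI μ k l rowf colf = discreteMI (range k) (range l) (cellProb μ rowf colf) := by
  have hrow_eq : ∀ i, μ.real {z | rowf z.2 = i} = ∑ j ∈ range l, cellProb μ rowf colf i j :=
    fun i => by
      rw [measureReal_eq_sum_preimage_inter μ (hcol.1.comp measurable_fst) (range l)
        (fun z => mem_range.2 (hcol.2 z.1)) {z | rowf z.2 = i}]
      refine sum_congr rfl fun j _ => congrArg μ.real ?_
      ext z
      simp [and_comm]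
  have hcol_eq : ∀ j, μ.real {z | colf z.1 = j} = ∑ i ∈ range k, cellProb μ rowf colf i j :=
    fun j => by
      rw [measureReal_eq_sum_preimage_inter μ (hrow.1.comp measurable_snd) (range k)
        (fun z => mem_range.2 (hrow.2 z.2)) {z | colf z.1 = j}]
      refine sum_congr rfl fun i _ => congrArg μ.real ?_
      ext z
      simp
  simp only [gridMI, discreteMI, ← measureReal_def, hrow_eq, hcol_eq, cellProb]

lemma sum_cellProb [IsProbabilityMeasure μ] (hrow : IsMeasPart k rowf)
    (hcol : IsMeasPart l colf) :
    ∑ j ∈ range l, ∑ i ∈ range k, cellProb μ rowf colf i j = 1 := by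
  rw [sum_comm, ← sum_product', ← probReal_univ (μ := μ),
    measureReal_eq_sum_preimage_inter μ ((hrow.1.comp measurable_snd).prodMk
      (hcol.1.comp measurable_fst)) (range k ×ˢ range l)
      (fun z => mem_product.2 ⟨mem_range.2 (hrow.2 z.2), mem_range.2 (hcol.2 z.1)⟩)
      Set.univ]
  refine sum_congr rfl fun ij _ => congrArg μ.real ?_
  ext z
  simp [Prod.ext_iff]

end Discretization

section Densities

variable {X : Type*} [MeasurableSpace X] {μ : Measure X}

lemma measureReal_withDensity_ofReal {f : X → ℝ} (hf : Integrable f μ) (hf0 : ∀ x, 0 ≤ f x)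
    {S : Set X} (hS : MeasurableSet S) :
    (μ.withDensity fun x => ENNReal.ofReal (f x)).real S = ∫ x in S, f x ∂μ := by
  rw [measureReal_def, withDensity_apply _ hS, ← ofReal_integral_eq_lintegral_ofReal
    hf.integrableOn (ae_of_all _ hf0), ENNReal.toReal_ofReal (integral_nonneg hf0)]

lemma isProbabilityMeasure_withDensity_ofReal {f : X → ℝ} (hf0 : ∀ x, 0 ≤ f x)
    (hf1 : ∫ x, f x ∂μ = 1) :
    IsProbabilityMeasure (μ.withDensity fun x => ENNReal.ofReal (f x)) := by
  have hf : Integrable f μ := .of_integral_ne_zero (by rw [hf1]; exact one_ne_zero)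
  refine ⟨?_⟩
  rw [withDensity_apply _ MeasurableSet.univ, Measure.restrict_univ,
    ← ofReal_integral_eq_lintegral_ofReal hf (ae_of_all _ hf0), hf1, ENNReal.ofReal_one]

lemma sum_abs_setIntegral_preimage_le {ι : Type*} {g : X → ℝ} (hg : Integrable g μ) {c : X → ι}
    (s : Finset ι) (hc : ∀ i ∈ s, MeasurableSet (c ⁻¹' {i})) :
    ∑ i ∈ s, |∫ x in c ⁻¹' {i}, g x ∂μ| ≤ ∫ x, |g x| ∂μ := calc
  _ ≤ ∑ i ∈ s, ∫ x in c ⁻¹' {i}, |g x| ∂μ := sum_le_sum fun _ _ => abs_integral_le_integral_abs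
  _ = ∫ x in ⋃ i ∈ s, c ⁻¹' {i}, |g x| ∂μ :=
      (integral_biUnion_finset s hc (Set.pairwiseDisjoint_fiber c s) fun _ _ =>
        hg.abs.integrableOn).symm
  _ ≤ ∫ x, |g x| ∂μ := setIntegral_le_integral hg.abs (ae_of_all _ fun _ => abs_nonneg _)

lemma gridL1DistLE_withDensity {f f' : ℝ × ℝ → ℝ} (hf : Integrable f) (hf' : Integrable f')
    (hf0 : ∀ z, 0 ≤ f z) (hf'0 : ∀ z, 0 ≤ f' z) :
    GridL1DistLE (volume.withDensity fun z => ENNReal.ofReal (f z))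
      (volume.withDensity fun z => ENNReal.ofReal (f' z)) (∫ z, |f z - f' z|) := by
  intro k l rowf colf hrow hcol
  set cell : ℝ × ℝ → ℕ × ℕ := fun z => (rowf z.2, colf z.1)
  have hcell : Measurable cell := (hrow.1.comp measurable_snd).prodMk (hcol.1.comp measurable_fst)
  have hfib : ∀ i j, cell ⁻¹' {(i, j)} = {z | rowf z.2 = i ∧ colf z.1 = j} := fun i j => by
    ext z
    simp [cell, Prod.ext_iff]
  have hdiff : ∀ i j, cellProb (volume.withDensity fun z => ENNReal.ofReal (f z)) rowf colf i j -
      cellProb (volume.withDensity fun z => ENNReal.ofReal (f' z)) rowf colf i j =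
      ∫ z in cell ⁻¹' {(i, j)}, (f z - f' z) := fun i j => by
    have hS := hcell (measurableSet_singleton (i, j))
    rw [integral_sub hf.integrableOn hf'.integrableOn, cellProb, cellProb, ← hfib,
      measureReal_withDensity_ofReal hf hf0 hS, measureReal_withDensity_ofReal hf' hf'0 hS]
  simp only [hdiff]
  rw [sum_comm, ← sum_product' (f := fun i j => |∫ z in cell ⁻¹' {(i, j)}, (f z - f' z)|)]
  exact sum_abs_setIntegral_preimage_le (hf.sub hf') _
    fun ij _ => hcell (measurableSet_singleton ij)

end Densities

lemma ciSup_le_ciSup_add {ι : Sort*} [Nonempty ι] {a b : ι → ℝ} {ε : ℝ}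
    (hb : BddAbove (Set.range b)) (h : ∀ i, a i ≤ b i + ε) : ⨆ i, a i ≤ (⨆ i, b i) + ε :=
  ciSup_le fun i => (h i).trans (add_le_add_left (le_ciSup hb i) ε)

lemma abs_ciSup_sub_ciSup_le {ι : Sort*} [Nonempty ι] {a b : ι → ℝ} {ε : ℝ}
    (ha : BddAbove (Set.range a)) (hb : BddAbove (Set.range b)) (h : ∀ i, |a i - b i| ≤ ε) :
    |(⨆ i, a i) - ⨆ i, b i| ≤ ε :=
  abs_sub_le_iff.2
    ⟨sub_le_iff_le_add'.2 (ciSup_le_ciSup_add hb fun i => by linarith [(abs_sub_le_iff.1 (h i)).1]),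
     sub_le_iff_le_add'.2 (ciSup_le_ciSup_add ha fun i => by linarith [(abs_sub_le_iff.1 (h i)).2])⟩

section CharacteristicMatrix

variable {μ ν : Measure (ℝ × ℝ)} [IsProbabilityMeasure μ] [IsProbabilityMeasure ν] {k l : ℕ}
  {δ : ℝ}

lemma gridMI_le_log_min {rowf colf : ℝ → ℕ} (hrow : IsMeasPart k rowf)
    (hcol : IsMeasPart l colf) : gridMI μ k l rowf colf ≤ log (min (k : ℝ) l) := by
  rw [gridMI_eq_discreteMI hrow hcol]
  simpa only [card_range] using discreteMI_le_log_min (p := cellProb μ rowf colf)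
    (fun _ _ _ _ => measureReal_nonneg) (sum_cellProb (μ := μ) hrow hcol)

lemma abs_gridMI_sub_le {rowf colf : ℝ → ℕ} (hrow : IsMeasPart k rowf)
    (hcol : IsMeasPart l colf) (hμν : GridL1DistLE μ ν (2 * δ)) :
    |gridMI μ k l rowf colf - gridMI ν k l rowf colf| ≤
      2 * (δ * log (min (k : ℝ) l) + (negMulLog δ - negMulLog (1 + δ))) := by
  rw [gridMI_eq_discreteMI hrow hcol, gridMI_eq_discreteMI hrow hcol]
  simpa only [card_range] using abs_discreteMI_sub_le_log_min (p := cellProb μ rowf colf)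
    (q := cellProb ν rowf colf) (fun _ _ _ _ => measureReal_nonneg)
    (fun _ _ _ _ => measureReal_nonneg)
    (sum_cellProb (μ := μ) hrow hcol) (sum_cellProb (μ := ν) hrow hcol) (hμν k l _ _ hrow hcol)

lemma nonempty_intervalGrids (hk : 0 < k) (hl : 0 < l) :
    Nonempty {g : (ℝ → ℕ) × (ℝ → ℕ) // IsIntervalPart k g.1 ∧ IsIntervalPart l g.2} :=
  ⟨⟨(fun _ => 0, fun _ => 0), ⟨monotone_const, fun _ => hk⟩, ⟨monotone_const, fun _ => hl⟩⟩⟩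

lemma bddAbove_range_gridMI (k l : ℕ) :
    BddAbove (Set.range fun g : {g : (ℝ → ℕ) × (ℝ → ℕ) //
      IsIntervalPart k g.1 ∧ IsIntervalPart l g.2} => gridMI μ k l g.1.1 g.1.2) :=
  ⟨_, Set.forall_mem_range.2 fun g => gridMI_le_log_min (μ := μ) g.2.1.isMeasPart g.2.2.isMeasPart⟩

lemma charMatrix_le_one (hk : 1 < k) (hl : 1 < l) : charMatrix μ k l ≤ 1 := by
  have hlog : 0 < log (min (k : ℝ) l) :=
    log_pos (lt_min (by exact_mod_cast hk) (by exact_mod_cast hl))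
  have := nonempty_intervalGrids (zero_lt_one.trans hk) (zero_lt_one.trans hl)
  rw [charMatrix, div_le_one hlog]
  exact ciSup_le fun g => gridMI_le_log_min g.2.1.isMeasPart g.2.2.isMeasPart

lemma abs_charMatrix_sub_le (hk : 1 < k) (hl : 1 < l) (hδ : 0 ≤ δ)
    (hμν : GridL1DistLE μ ν (2 * δ)) :
    |charMatrix μ k l - charMatrix ν k l| ≤
      2 * δ + 2 * (negMulLog δ - negMulLog (1 + δ)) / log 2 := by
  set L := log (min (k : ℝ) l)
  have hL : log 2 ≤ L := log_le_log two_pos (le_min (by exact_mod_cast hk) (by exact_mod_cast hl))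
  have hlog2 : 0 < log 2 := log_pos one_lt_two
  have hC : 0 ≤ negMulLog δ - negMulLog (1 + δ) := by
    linarith [negMulLog_add_le zero_le_one hδ, negMulLog_one]
  have := nonempty_intervalGrids (zero_lt_one.trans hk) (zero_lt_one.trans hl)
  have hIStar : |IStar μ k l - IStar ν k l| ≤ 2 * (δ * L + (negMulLog δ - negMulLog (1 + δ))) :=
    abs_ciSup_sub_ciSup_le (bddAbove_range_gridMI k l) (bddAbove_range_gridMI k l)
      fun g => abs_gridMI_sub_le g.2.1.isMeasPart g.2.2.isMeasPart hμν
  have hC_div :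
      negMulLog δ - negMulLog (1 + δ) ≤ (negMulLog δ - negMulLog (1 + δ)) / log 2 * L := by
    rw [div_mul_eq_mul_div, le_div_iff₀ hlog2]
    exact mul_le_mul_of_nonneg_left hL hC
  rw [charMatrix, charMatrix, ← sub_div, abs_div, abs_of_pos (hlog2.trans_le hL),
    div_le_iff₀ (hlog2.trans_le hL)]
  calc _ ≤ 2 * (δ * L + (negMulLog δ - negMulLog (1 + δ))) := hIStar
    _ ≤ 2 * (δ * L + (negMulLog δ - negMulLog (1 + δ)) / log 2 * L) := by gcongr
    _ = _ := by ring

theorem abs_MICStar_sub_le (hδ : 0 ≤ δ) (hμν : GridL1DistLE μ ν (2 * δ)) :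
    |MICStar μ - MICStar ν| ≤ 2 * δ + 2 * (negMulLog δ - negMulLog (1 + δ)) / log 2 := by
  have hbdd : ∀ (ρ : Measure (ℝ × ℝ)) [IsProbabilityMeasure ρ] (k : {n : ℕ // 1 < n}),
      BddAbove (Set.range fun l : {n : ℕ // 1 < n} => charMatrix ρ k l) := fun ρ _ k =>
    ⟨1, Set.forall_mem_range.2 fun l => charMatrix_le_one k.2 l.2⟩
  have : Nonempty {n : ℕ // 1 < n} := ⟨⟨2, one_lt_two⟩⟩
  refine abs_ciSup_sub_ciSup_le ?_ ?_ fun k => abs_ciSup_sub_ciSup_le (hbdd μ k) (hbdd ν k)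
    fun l => abs_charMatrix_sub_le k.2 l.2 hδ hμν
  all_goals exact ⟨1, Set.forall_mem_range.2 fun k => ciSup_le fun l => charMatrix_le_one k.2 l.2⟩

end CharacteristicMatrix

lemma two_mul_add_div_log_two_le {δ : ℝ} (hδ0 : 0 < δ) (hδ4 : δ ≤ 1 / 4) :
    2 * δ + 2 * (negMulLog δ - negMulLog (1 + δ)) / log 2 ≤ 4 * binEntropy (2 * δ) + 7 * δ := by
  have hL₁ := log_two_gt_d9
  have hL₂ := log_two_lt_d9
  have hlogδ : log δ ≤ -(2 * log 2) := calc
    log δ ≤ log (2 ^ 2)⁻¹ := log_le_log hδ0 (by norm_num [hδ4])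
    _ = -(2 * log 2) := by rw [log_inv, log_pow]; push_cast; ring
  have hηδ : 2 * δ * log 2 ≤ negMulLog δ := by
    rw [negMulLog]
    nlinarith
  have hbin : 2 * negMulLog δ - 2 * δ * log 2 ≤ binEntropy (2 * δ) := by
    have h2 : negMulLog 2 = -(2 * log 2) := by simp [negMulLog]
    have h1 : 0 ≤ negMulLog (1 - 2 * δ) := negMulLog_nonneg (by linarith) (by linarith)
    rw [binEntropy_eq_negMulLog_add_negMulLog_one_sub, negMulLog_mul, h2]
    linarith
  have h1δ : -negMulLog (1 + δ) ≤ δ + δ ^ 2 := by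
    have := log_le_sub_one_of_pos (show 0 < 1 + δ by linarith)
    rw [negMulLog]
    nlinarith
  suffices 2 * (negMulLog δ - negMulLog (1 + δ)) ≤ (4 * binEntropy (2 * δ) + 5 * δ) * log 2 by
    rw [← le_sub_iff_add_le', div_le_iff₀ (by linarith)]
    linarith
  have hδL : 0.69 * δ ≤ δ * log 2 := by nlinarith
  have hδL2 : 0.47 * δ ≤ δ * log 2 ^ 2 := by nlinarith
  have hδ2 : δ ^ 2 ≤ δ / 4 := by nlinarith
  nlinarith [mul_le_mul_of_nonneg_right hηδ (show 0 ≤ 8 * log 2 - 2 by linarith),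
    mul_le_mul_of_nonneg_right hbin (show 0 ≤ log 2 by linarith)]

theorem stmt14_general (f f' : ℝ × ℝ → ℝ)
    (hf0 : ∀ z, 0 ≤ f z) (hf'0 : ∀ z, 0 ≤ f' z)
    (hf1 : ∫ z, f z = 1) (hf'1 : ∫ z, f' z = 1)
    (δ : ℝ) (hδ0 : 0 < δ) (hδ4 : δ ≤ 1 / 4)
    (hL1 : ∫ z, |f z - f' z| ≤ 2 * δ) :
    |MICStar (volume.withDensity fun z => ENNReal.ofReal (f z)) -
        MICStar (volume.withDensity fun z => ENNReal.ofReal (f' z))|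
      ≤ 4 * Real.binEntropy (2 * δ) + 7 * δ := by
  have hf : Integrable f := .of_integral_ne_zero (by rw [hf1]; exact one_ne_zero)
  have hf' : Integrable f' := .of_integral_ne_zero (by rw [hf'1]; exact one_ne_zero)
  have := isProbabilityMeasure_withDensity_ofReal hf0 hf1
  have := isProbabilityMeasure_withDensity_ofReal hf'0 hf'1
  have hgrid : GridL1DistLE (volume.withDensity fun z => ENNReal.ofReal (f z))
      (volume.withDensity fun z => ENNReal.ofReal (f' z)) (2 * δ) :=
    fun k l rowf colf hrow hcol =>
      (gridL1DistLE_withDensity hf hf' hf0 hf'0 k l rowf colf hrow hcol).trans hL1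
  exact (abs_MICStar_sub_le hδ0.le hgrid).trans (two_mul_add_div_log_two_le hδ0 hδ4)

/-- `MIC*` is uniformly continuous on densities: if two probability densities on `[0,1]²` are
within `2δ` in `L¹` with `0 < δ ≤ 1/4`, then their `MIC*` values differ by at most
`4 H_b(2δ) + 7δ`. -/
theorem stmt14 (f f' : ℝ × ℝ → ℝ) (hfm : Measurable f) (hf'm : Measurable f')
    (hf0 : ∀ z, 0 ≤ f z) (hf'0 : ∀ z, 0 ≤ f' z)
    (hf1 : ∫ z, f z = 1) (hf'1 : ∫ z, f' z = 1)
    (hfs : ∀ z ∉ Set.Icc (0 : ℝ) 1 ×ˢ Set.Icc (0 : ℝ) 1, f z = 0)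
    (hf's : ∀ z ∉ Set.Icc (0 : ℝ) 1 ×ˢ Set.Icc (0 : ℝ) 1, f' z = 0)
    (δ : ℝ) (hδ0 : 0 < δ) (hδ4 : δ ≤ 1 / 4)
    (hL1 : ∫ z, |f z - f' z| ≤ 2 * δ) :
    |MICStar (volume.withDensity fun z => ENNReal.ofReal (f z)) -
        MICStar (volume.withDensity fun z => ENNReal.ofReal (f' z))|
      ≤ 4 * Real.binEntropy (2 * δ) + 7 * δ :=
  stmt14_general f f' hf0 hf'0 hf1 hf'1 δ hδ0 hδ4 hL1
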